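/- Application of realizers: for all unitary types A, B and closed term distributions s⃗, t⃗, if s⃗ ⊩ A⇒B and t⃗ ⊩ A, then s⃗ t⃗ ⊩ B (where application of distributions is extended bilinearly). -/

import Mathlib

namespace LinAlg

/-! ### Syntax: pure values, pure terms, term distributions -/

mutual
inductive Val : Type where
  | var : ℕ → Val
  | lam : ℕ → Distr → Val
  | star : Val
  | pair : Val → Val → Val
  | inl : Val → Val
  | inr : Val → Val
inductive Term : Type where
  | val : Val → Term
  | app : Term → Term → Term
  | seq : Term → Distr → Term
  | letp : ℕ → ℕ → Term → Distr → Term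
  | matc : Term → ℕ → Distr → ℕ → Distr → Term
inductive Distr : Type where
  | zero : Distr
  | single : Term → Distr
  | add : Distr → Distr → Distr
  | smul : ℂ → Distr → Distr
end

noncomputable instance : DecidableEq Val := fun _ _ => Classical.dec _
noncomputable instance : DecidableEq Term := fun _ _ => Classical.dec _
noncomputable instance : DecidableEq Distr := fun _ _ => Classical.dec _

/-! ### The shallow congruence ≡ on term distributions -/

inductive Cong : Distr → Distr → Prop where
  | addZero (d : Distr) : Cong (d.add .zero) d
  | oneSmul (d : Distr) : Cong (Distr.smul 1 d) d
  | smulSmul (a b : ℂ) (d : Distr) : Cong (Distr.smul a (Distr.smul b d)) (Distr.smul (a * b) d)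
  | addComm (d₁ d₂ : Distr) : Cong (d₁.add d₂) (d₂.add d₁)
  | addAssoc (d₁ d₂ d₃ : Distr) : Cong ((d₁.add d₂).add d₃) (d₁.add (d₂.add d₃))
  | smulDistrib (a b : ℂ) (d : Distr) : Cong (Distr.smul (a + b) d) ((Distr.smul a d).add (Distr.smul b d))
  | smulAdd (a : ℂ) (d₁ d₂ : Distr) : Cong (Distr.smul a (d₁.add d₂)) ((Distr.smul a d₁).add (Distr.smul a d₂))
  | refl (d : Distr) : Cong d d
  | symm {d₁ d₂ : Distr} : Cong d₁ d₂ → Cong d₂ d₁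
  | trans {d₁ d₂ d₃ : Distr} : Cong d₁ d₂ → Cong d₂ d₃ → Cong d₁ d₃
  | addCongr {d₁ d₁' d₂ d₂' : Distr} : Cong d₁ d₁' → Cong d₂ d₂' → Cong (d₁.add d₂) (d₁'.add d₂')
  | smulCongr (a : ℂ) {d d' : Distr} : Cong d d' → Cong (Distr.smul a d) (Distr.smul a d')

/-! ### Free variables -/

mutual
def fvV : Val → Finset ℕ
  | .var y => {y}
  | .lam y b => fvD b \ {y}
  | .star => ∅
  | .pair v₁ v₂ => fvV v₁ ∪ fvV v₂
  | .inl v => fvV v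
  | .inr v => fvV v
def fvT : Term → Finset ℕ
  | .val v => fvV v
  | .app s t => fvT s ∪ fvT t
  | .seq t s => fvT t ∪ fvD s
  | .letp y z t s => fvT t ∪ (fvD s \ {y, z})
  | .matc t y s₁ z s₂ => fvT t ∪ (fvD s₁ \ {y}) ∪ (fvD s₂ \ {z})
def fvD : Distr → Finset ℕ
  | .zero => ∅
  | .single t => fvT t
  | .add d₁ d₂ => fvD d₁ ∪ fvD d₂
  | .smul _ d => fvD d
end

/-! ### Pure substitution -/

mutual
def substV (x : ℕ) (w : Val) : Val → Val
  | .var y => if y = x then w else .var y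
  | .lam y b => if y = x then .lam y b else .lam y (substD x w b)
  | .star => .star
  | .pair v₁ v₂ => .pair (substV x w v₁) (substV x w v₂)
  | .inl v => .inl (substV x w v)
  | .inr v => .inr (substV x w v)
def substT (x : ℕ) (w : Val) : Term → Term
  | .val v => .val (substV x w v)
  | .app s t => .app (substT x w s) (substT x w t)
  | .seq t s => .seq (substT x w t) (substD x w s)
  | .letp y z t s =>
      .letp y z (substT x w t) (if y = x ∨ z = x then s else substD x w s)
  | .matc t y s₁ z s₂ =>
      .matc (substT x w t) y (if y = x then s₁ else substD x w s₁)
        z (if z = x then s₂ else substD x w s₂)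
def substD (x : ℕ) (w : Val) : Distr → Distr
  | .zero => .zero
  | .single t => .single (substT x w t)
  | .add d₁ d₂ => .add (substD x w d₁) (substD x w d₂)
  | .smul a d => .smul a (substD x w d)
end

/-! ### Linear extensions of the syntactic constructs -/

def appTD (s : Term) : Distr → Distr
  | .zero => .zero
  | .single t => .single (.app s t)
  | .add d₁ d₂ => .add (appTD s d₁) (appTD s d₂)
  | .smul a d => .smul a (appTD s d)

def appDV : Distr → Val → Distr
  | .zero, _ => .zero
  | .single t, v => .single (.app t (.val v))
  | .add d₁ d₂, v => .add (appDV d₁ v) (appDV d₂ v)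
  | .smul a d, v => .smul a (appDV d v)

def seqD : Distr → Distr → Distr
  | .zero, _ => .zero
  | .single t, s => .single (.seq t s)
  | .add d₁ d₂, s => .add (seqD d₁ s) (seqD d₂ s)
  | .smul a d, s => .smul a (seqD d s)

def letpD (x y : ℕ) : Distr → Distr → Distr
  | .zero, _ => .zero
  | .single t, s => .single (.letp x y t s)
  | .add d₁ d₂, s => .add (letpD x y d₁ s) (letpD x y d₂ s)
  | .smul a d, s => .smul a (letpD x y d s)

def matcD : Distr → ℕ → Distr → ℕ → Distr → Distr
  | .zero, _, _, _, _ => .zero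
  | .single t, y, s₁, z, s₂ => .single (.matc t y s₁ z s₂)
  | .add d₁ d₂, y, s₁, z, s₂ => .add (matcD d₁ y s₁ z s₂) (matcD d₂ y s₁ z s₂)
  | .smul a d, y, s₁, z, s₂ => .smul a (matcD d y s₁ z s₂)

/-- Bilinear application of distributions:  (Σᵢ αᵢ·tᵢ)(Σⱼ βⱼ·sⱼ) = Σᵢⱼ αᵢβⱼ·(tᵢ sⱼ). -/
def appD : Distr → Distr → Distr
  | .zero, _ => .zero
  | .single t, w => appTD t w
  | .add d₁ d₂, w => .add (appD d₁ w) (appD d₂ w)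
  | .smul a d, w => .smul a (appD d w)

/-- Bilinear substitution  d⟨x := w⃗⟩ = Σⱼ βⱼ · d[x := wⱼ]  (recursion on the value
distribution w⃗; non-value summands are junk and are sent to 0⃗). -/
def bsubst (x : ℕ) (d : Distr) : Distr → Distr
  | .zero => .zero
  | .single (.val w) => substD x w d
  | .single _ => .zero
  | .add w₁ w₂ => .add (bsubst x d w₁) (bsubst x d w₂)
  | .smul a w => .smul a (bsubst x d w)

/-! ### Evaluation -/

inductive Atom : Term → Distr → Prop where
  | beta (x : ℕ) (b : Distr) (v : Val) :
      Atom (.app (.val (.lam x b)) (.val v)) (substD x v b)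
  | seqStar (s : Distr) : Atom (.seq (.val .star) s) s
  | letPair (x y : ℕ) (v w : Val) (s : Distr) :
      Atom (.letp x y (.val (.pair v w)) s) (substD y w (substD x v s))
  | matchInl (v : Val) (y : ℕ) (s₁ : Distr) (z : ℕ) (s₂ : Distr) :
      Atom (.matc (.val (.inl v)) y s₁ z s₂) (substD y v s₁)
  | matchInr (v : Val) (y : ℕ) (s₁ : Distr) (z : ℕ) (s₂ : Distr) :
      Atom (.matc (.val (.inr v)) y s₁ z s₂) (substD z v s₂)
  | appR (s : Term) {t : Term} {d : Distr} : Atom t d → Atom (.app s t) (appTD s d)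
  | appL (v : Val) {t : Term} {d : Distr} : Atom t d → Atom (.app t (.val v)) (appDV d v)
  | seqC (s : Distr) {t : Term} {d : Distr} : Atom t d → Atom (.seq t s) (seqD d s)
  | letC (x y : ℕ) (s : Distr) {t : Term} {d : Distr} :
      Atom t d → Atom (.letp x y t s) (letpD x y d s)
  | matcC (y : ℕ) (s₁ : Distr) (z : ℕ) (s₂ : Distr) {t : Term} {d : Distr} :
      Atom t d → Atom (.matc t y s₁ z s₂) (matcD d y s₁ z s₂)

/-- One-step evaluation:  t⃗ ≻ t⃗′. -/
def Step (d d' : Distr) : Prop :=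
  ∃ (a : ℂ) (s : Term) (s' r : Distr),
    Cong d (Distr.add (.smul a (.single s)) r) ∧
    Cong d' (Distr.add (.smul a s') r) ∧ Atom s s'

/-- Evaluation  t⃗ ≻≻ t⃗′:  reflexive-transitive closure of one-step evaluation. -/
def Eval : Distr → Distr → Prop := Relation.ReflTransGen Step

/-! ### Value distributions, inner product, norm -/

def IsValT : Term → Prop
  | .val _ => True
  | _ => False

def IsValD : Distr → Prop
  | .zero => True
  | .single t => IsValT t
  | .add d₁ d₂ => IsValD d₁ ∧ IsValD d₂
  | .smul _ d => IsValD d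

/-- The set of closed value distributions. -/
def ClosedValD : Set Distr := {d | IsValD d ∧ fvD d = ∅}

/-- Total coefficient of the pure term `t` in the distribution `d`. -/
noncomputable def coeff : Distr → Term → ℂ
  | .zero, _ => 0
  | .single s, t => if s = t then 1 else 0
  | .add d₁ d₂, t => coeff d₁ t + coeff d₂ t
  | .smul a d, t => a * coeff d t

/-- The domain of a distribution (all pure terms occurring in it, even with
coefficient 0). -/
noncomputable def domD : Distr → Finset Term
  | .zero => ∅
  | .single t => {t}
  | .add d₁ d₂ => domD d₁ ∪ domD d₂
  | .smul _ d => domD d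

/-- The inner product ⟨v⃗|w⃗⟩ on value distributions. -/
noncomputable def innerD (v w : Distr) : ℂ :=
  ∑ t ∈ domD v, (starRingEnd ℂ) (coeff v t) * coeff w t

/-- The pseudo-ℓ²-norm ‖v⃗‖. -/
noncomputable def normD (v : Distr) : ℝ := Real.sqrt (innerD v v).re

/-- The unit sphere S of closed value distributions of norm 1. -/
def Sphere : Set Distr := {d | d ∈ ClosedValD ∧ normD d = 1}

/-- Span(X): weak linear combinations of elements of X (taken modulo ≡). -/
inductive Span (X : Set Distr) : Distr → Prop where
  | mem {d : Distr} : d ∈ X → Span X d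
  | zero : Span X .zero
  | add {d₁ d₂ : Distr} : Span X d₁ → Span X d₂ → Span X (d₁.add d₂)
  | smul (a : ℂ) {d : Distr} : Span X d → Span X (Distr.smul a d)
  | congr {d d' : Distr} : Span X d → Cong d d' → Span X d'

/-! ### Realizability: unitary types -/

/-- t⃗ ⊩ A :  t⃗ evaluates to some vector of ⟦A⟧. -/
def Realizes (A : Set Distr) (t : Distr) : Prop := ∃ v ∈ A, Eval t v

/-- |A| : the set of (closed) realizers of A. -/
def realizersOf (A : Set Distr) : Set Distr := {t | fvD t = ∅ ∧ Realizes A t}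

/-! ### Type constructors -/

def UnitT : Set Distr := {Distr.single (.val .star)}

/-- ♭A : the basis of A. -/
def flatT (X : Set Distr) : Set Distr :=
  {e | ∃ d ∈ X, ∃ v : Val, (Term.val v) ∈ domD d ∧ e = Distr.single (.val v)}

/-- ♯A : the unitary span of A. -/
def sharpT (X : Set Distr) : Set Distr := {d | Span X d ∧ d ∈ Sphere}

/-- Linear extension of a value constructor. -/
def mapVD (f : Val → Val) : Distr → Distr
  | .zero => .zero
  | .single (.val v) => .single (.val (f v))
  | .single t => .single t
  | .add d₁ d₂ => .add (mapVD f d₁) (mapVD f d₂)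
  | .smul a d => .smul a (mapVD f d)

def inlD : Distr → Distr := mapVD Val.inl
def inrD : Distr → Distr := mapVD Val.inr

/-- Bilinear extension of pairing. -/
def pairD : Distr → Distr → Distr
  | .zero, _ => .zero
  | .single (.val v), w => mapVD (Val.pair v) w
  | .single t, _ => .single t
  | .add d₁ d₂, w => .add (pairD d₁ w) (pairD d₂ w)
  | .smul a d, w => .smul a (pairD d w)

/-- A + B (simple sum). -/
def plusT (A B : Set Distr) : Set Distr :=
  {d | (∃ v ∈ A, d = inlD v) ∨ (∃ w ∈ B, d = inrD w)}

/-- A × B (simple product). -/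
def timesT (A B : Set Distr) : Set Distr :=
  {d | ∃ v ∈ A, ∃ w ∈ B, d = pairD v w}

/-- A → B (pure arrow). -/
def arrowT (A B : Set Distr) : Set Distr :=
  {d | ∃ (x : ℕ) (b : Distr), d = Distr.single (.val (.lam x b)) ∧ fvD d = ∅ ∧
      ∀ v ∈ A, Realizes B (bsubst x b v)}

/-- Σᵢ αᵢ · λx.t⃗ᵢ  ↦  Σᵢ αᵢ · t⃗ᵢ  (strips the λx in front of each summand). -/
def stripLam (x : ℕ) : Distr → Distr
  | .zero => .zero
  | .single (.val (.lam y b)) => if y = x then b else .single (.val (.lam y b))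
  | .single t => .single t
  | .add d₁ d₂ => .add (stripLam x d₁) (stripLam x d₂)
  | .smul a d => .smul a (stripLam x d)

/-- A ⇒ B (unitary arrow). -/
def uarrowT (A B : Set Distr) : Set Distr :=
  {d | d ∈ Sphere ∧ ∃ x : ℕ,
      (∀ t ∈ domD d, ∃ b : Distr, t = Term.val (.lam x b)) ∧
      ∀ v ∈ A, Realizes B (bsubst x (stripLam x d) v)}

/-! ### Booleans -/

def ttD : Distr := .single (.val (.inl .star))
def ffD : Distr := .single (.val (.inr .star))

/-- 𝔹 = 𝕌 + 𝕌. -/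
def BoolT : Set Distr := plusT UnitT UnitT

/-- ♯𝔹, the type of unitary Booleans. -/
def sharpBool : Set Distr := sharpT BoolT

/-- Boolean projection π : Span({tt,ff}) → ℂ². -/
noncomputable def piB (d : Distr) : ℂ × ℂ :=
  (coeff d (.val (.inl .star)), coeff d (.val (.inr .star)))

/-- t⃗ represents the operator F : ℂ² → ℂ². -/
def Represents (td : Distr) (F : ℂ × ℂ → ℂ × ℂ) : Prop :=
  ∀ v, Span BoolT v → ∃ w, Span BoolT w ∧ Eval (appD td v) w ∧ piB w = F (piB v)

/-- Hermitian inner product on ℂ². -/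
def hinner (u v : ℂ × ℂ) : ℂ :=
  (starRingEnd ℂ) u.1 * v.1 + (starRingEnd ℂ) u.2 * v.2

/-- A unitary operator on ℂ². -/
def IsUnitaryOp (F : ℂ × ℂ → ℂ × ℂ) : Prop :=
  ∀ u v : ℂ × ℂ, hinner (F u) (F v) = hinner u v

/-! ### Typing contexts, substitutions, judgments -/

abbrev Ctx := List (ℕ × Set Distr)
abbrev Subst := List (ℕ × Distr)

/-- Applying a substitution, one bilinear substitution at a time. -/
def applySub : Distr → Subst → Distr
  | d, [] => d
  | d, (x, w) :: σ => applySub (bsubst x d w) σ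

/-- σ ∈ ⟦Γ⟧. -/
def SubMem (σ : Subst) (Γ : Ctx) : Prop :=
  List.Forall₂ (fun p q => p.1 = q.1 ∧ p.2 ∈ q.2) σ Γ

def ctxDom (Γ : Ctx) : Set ℕ := {x | ∃ A, (x, A) ∈ Γ}

/-- dom♯(Γ): the variables of Γ whose type is not a pure-value type. -/
def ctxDomSharp (Γ : Ctx) : Set ℕ := {x | ∃ A, (x, A) ∈ Γ ∧ flatT A ≠ A}

/-- All the types of the context are unitary types (subsets of the sphere). -/
def CtxUnitary (Γ : Ctx) : Prop := ∀ p ∈ Γ, p.2 ⊆ Sphere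

/-- Validity of the typing judgment  Γ ⊢ t⃗ : A. -/
def ValidJ (Γ : Ctx) (t : Distr) (A : Set Distr) : Prop :=
  ctxDomSharp Γ ⊆ (fvD t : Set ℕ) ∧ (fvD t : Set ℕ) ⊆ ctxDom Γ ∧
  ∀ σ : Subst, SubMem σ Γ → Realizes A (applySub t σ)

/-- Validity of the orthogonality judgment  Γ | Δ₁ ⊢ t⃗₁ ⊥ Δ₂ ⊢ t⃗₂ : A. -/
def OrthoJ (Γ Δ₁ Δ₂ : Ctx) (t₁ t₂ : Distr) (A : Set Distr) : Prop :=
  ValidJ (Γ ++ Δ₁) t₁ A ∧ ValidJ (Γ ++ Δ₂) t₂ A ∧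
  ∀ σ σ₁ σ₂ : Subst, SubMem σ Γ → SubMem σ₁ Δ₁ → SubMem σ₂ Δ₂ →
    ∀ v₁ v₂ : Distr, v₁ ∈ ClosedValD → v₂ ∈ ClosedValD →
      Eval (applySub t₁ (σ ++ σ₁)) v₁ → Eval (applySub t₂ (σ ++ σ₂)) v₂ →
      innerD v₁ v₂ = 0

end LinAlg

namespace LinAlg


/-!
After `s⃗ ≻≻ Σᵢ αᵢ·λx.b⃗ᵢ ∈ ⟦A⇒B⟧` and `t⃗ ≻≻ v⃗ ∈ ⟦A⟧`, the application `s⃗ t⃗` evaluates its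
argument to `s⃗ v⃗`, then its function to `(Σᵢ αᵢ·λx.b⃗ᵢ) v⃗`, and finally β-reduces every summand
`(λx.b⃗ᵢ) vⱼ`, which reaches `Σᵢ αᵢ·b⃗ᵢ⟨x:=v⃗⟩` and from there some element of `⟦B⟧`.
Each phase lifts the rules for pure terms through bilinear application, which commutes with
sums and scalars only up to `≡`. A reduction of at least one step absorbs `≡` at both ends, and
the lifted reductions do take a step, because unit vectors have non-empty support.
-/

open Relation

theorem cong_smul_zero (a : ℂ) : Cong (Distr.smul a .zero) .zero := by
  -- there is no rule `0·t⃗ ≡ 0⃗`; instead `0⃗ ≡ 1·0⃗ ≡ (1+0)·0⃗ ≡ 1·0⃗ + 0·0⃗ ≡ 0·0⃗`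
  have h₀ : Cong (Distr.smul 0 .zero) .zero := by
    have h := Cong.smulDistrib 1 0 Distr.zero
    rw [add_zero] at h
    have h₁ : Cong (Distr.smul 1 .zero) .zero := .oneSmul _
    exact (h₁.symm.trans (h.trans ((h₁.addCongr (.refl _)).trans
      ((Cong.addComm _ _).trans (.addZero _))))).symm
  have h := (Cong.smulCongr a h₀.symm).trans (Cong.smulSmul a 0 .zero)
  rw [mul_zero] at h
  exact h.trans h₀

theorem cong_add_add_add_comm (a b c d : Distr) :
    Cong ((a.add b).add (c.add d)) ((a.add c).add (b.add d)) :=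
  (Cong.addAssoc a b (c.add d)).trans <|
    (Cong.addCongr (.refl a)
      ((Cong.addAssoc b c d).symm.trans
        ((Cong.addCongr (Cong.addComm b c) (.refl d)).trans (Cong.addAssoc c b d)))).trans
    (Cong.addAssoc a c (b.add d)).symm

structure CongLinear (F : Distr → Distr) : Prop where
  map_zero : Cong (F .zero) .zero
  map_add (d e : Distr) : Cong (F (d.add e)) ((F d).add (F e))
  map_smul (a : ℂ) (d : Distr) : Cong (F (.smul a d)) (.smul a (F d))

namespace CongLinear

variable {F G : Distr → Distr}

theorem of_eq (h_zero : F .zero = .zero) (h_add : ∀ d e, F (d.add e) = (F d).add (F e))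
    (h_smul : ∀ a d, F (.smul a d) = .smul a (F d)) : CongLinear F where
  map_zero := by rw [h_zero]; exact .refl _
  map_add d e := by rw [h_add]; exact .refl _
  map_smul a d := by rw [h_smul]; exact .refl _

theorem add (hF : CongLinear F) (hG : CongLinear G) : CongLinear fun d => (F d).add (G d) where
  map_zero := (hF.map_zero.addCongr hG.map_zero).trans (.addZero _)
  map_add d e := ((hF.map_add d e).addCongr (hG.map_add d e)).trans (cong_add_add_add_comm ..)
  map_smul a d := ((hF.map_smul a d).addCongr (hG.map_smul a d)).trans (Cong.smulAdd a _ _).symm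

theorem smul (hF : CongLinear F) (b : ℂ) : CongLinear fun d => .smul b (F d) where
  map_zero := (Cong.smulCongr b hF.map_zero).trans (cong_smul_zero b)
  map_add d e := (Cong.smulCongr b (hF.map_add d e)).trans (Cong.smulAdd b _ _)
  map_smul a d := by
    refine (Cong.smulCongr b (hF.map_smul a d)).trans ((Cong.smulSmul b a _).trans ?_)
    rw [mul_comm]
    exact (Cong.smulSmul a b _).symm

theorem congr (hF : CongLinear F) {d e : Distr} (h : Cong d e) : Cong (F d) (F e) := by
  induction h with
  | addZero d =>
    exact (hF.map_add d _).trans (((Cong.refl _).addCongr hF.map_zero).trans (.addZero _))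
  | oneSmul d => exact (hF.map_smul 1 d).trans (.oneSmul _)
  | smulSmul a b d =>
    exact (hF.map_smul a _).trans ((Cong.smulCongr a (hF.map_smul b d)).trans
      ((Cong.smulSmul a b _).trans (hF.map_smul _ d).symm))
  | addComm d₁ d₂ => exact (hF.map_add _ _).trans ((Cong.addComm _ _).trans (hF.map_add _ _).symm)
  | addAssoc d₁ d₂ d₃ =>
    exact (hF.map_add _ _).trans (((hF.map_add _ _).addCongr (.refl _)).trans
      ((Cong.addAssoc _ _ _).trans (((Cong.refl _).addCongr (hF.map_add _ _).symm).trans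
        (hF.map_add _ _).symm)))
  | smulDistrib a b d =>
    exact (hF.map_smul _ _).trans ((Cong.smulDistrib a b _).trans
      (((hF.map_smul a d).symm.addCongr (hF.map_smul b d).symm).trans (hF.map_add _ _).symm))
  | smulAdd a d₁ d₂ =>
    exact (hF.map_smul _ _).trans ((Cong.smulCongr a (hF.map_add _ _)).trans
      ((Cong.smulAdd _ _ _).trans
        (((hF.map_smul a d₁).symm.addCongr (hF.map_smul a d₂).symm).trans (hF.map_add _ _).symm)))
  | refl d => exact .refl _
  | symm _ ih => exact ih.symm
  | trans _ _ ih₁ ih₂ => exact ih₁.trans ih₂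
  | addCongr _ _ ih₁ ih₂ =>
    exact (hF.map_add _ _).trans ((ih₁.addCongr ih₂).trans (hF.map_add _ _).symm)
  | smulCongr a _ ih =>
    exact (hF.map_smul _ _).trans ((Cong.smulCongr a ih).trans (hF.map_smul _ _).symm)

theorem map_cong_zero_of_domD_eq_empty (hF : CongLinear F) :
    ∀ d, domD d = ∅ → Cong (F d) .zero
  | .zero, _ => hF.map_zero
  | .single _, h => by simp [domD] at h
  | .add d₁ d₂, h => by
    rw [domD, Finset.union_eq_empty] at h
    exact (hF.map_add _ _).trans (((hF.map_cong_zero_of_domD_eq_empty d₁ h.1).addCongr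
      (hF.map_cong_zero_of_domD_eq_empty d₂ h.2)).trans (.addZero _))
  | .smul a d, h =>
    (hF.map_smul _ _).trans ((Cong.smulCongr a (hF.map_cong_zero_of_domD_eq_empty d h)).trans
      (cong_smul_zero a))

end CongLinear

namespace Step

variable {d d' : Distr}

theorem congr {c e : Distr} (hc : Cong c d) (h : Step d d') (he : Cong d' e) : Step c e := by
  obtain ⟨α, u, u', r, h₁, h₂, hu⟩ := h
  exact ⟨α, u, u', r, hc.trans h₁, he.symm.trans h₂, hu⟩

theorem of_atom {u : Term} (h : Atom u d) : Step (.single u) d :=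
  ⟨1, u, d, .zero, ((Cong.addZero _).trans (.oneSmul _)).symm,
    ((Cong.addZero _).trans (.oneSmul _)).symm, h⟩

theorem add_left (h : Step d d') (e : Distr) : Step (d.add e) (d'.add e) := by
  obtain ⟨α, u, u', r, h₁, h₂, hu⟩ := h
  exact ⟨α, u, u', r.add e, (h₁.addCongr (.refl e)).trans (.addAssoc _ _ _),
    (h₂.addCongr (.refl e)).trans (.addAssoc _ _ _), hu⟩

theorem add_right (h : Step d d') (e : Distr) : Step (e.add d) (e.add d') :=
  congr (.addComm e d) (h.add_left e) (.addComm d' e)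

theorem smul (h : Step d d') (a : ℂ) : Step (.smul a d) (.smul a d') := by
  obtain ⟨α, u, u', r, h₁, h₂, hu⟩ := h
  have h_scale : ∀ e,
      Cong (.smul a ((Distr.smul α e).add r)) ((Distr.smul (a * α) e).add (.smul a r)) :=
    fun e => (Cong.smulAdd a _ _).trans ((Cong.smulSmul a α _).addCongr (.refl _))
  exact ⟨a * α, u, u', .smul a r, (Cong.smulCongr a h₁).trans (h_scale _),
    (Cong.smulCongr a h₂).trans (h_scale _), hu⟩

end Step

section TransGenStep

variable {d d' e e' : Distr}

theorem transGen_step_congr {c : Distr} (hc : Cong c d) (h : TransGen Step d d')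
    (he : Cong d' e) : TransGen Step c e := by
  obtain ⟨d₁, h₁, hr⟩ := TransGen.head'_iff.mp h
  cases hr with
  | refl => exact .single (h₁.congr hc he)
  | tail hr h₂ => exact TransGen.head' (h₁.congr hc (.refl _)) (hr.tail (h₂.congr (.refl _) he))

theorem transGen_step_add_left (h : TransGen Step d d') (e : Distr) :
    TransGen Step (d.add e) (d'.add e) :=
  TransGen.lift (Distr.add · e) (fun _ _ hs => hs.add_left e) _ _ h

theorem transGen_step_add_right (h : TransGen Step d d') (e : Distr) :
    TransGen Step (e.add d) (e.add d') :=
  TransGen.lift e.add (fun _ _ hs => hs.add_right e) _ _ h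

theorem transGen_step_smul (h : TransGen Step d d') (a : ℂ) :
    TransGen Step (.smul a d) (.smul a d') :=
  TransGen.lift (Distr.smul a) (fun _ _ hs => hs.smul a) _ _ h

theorem Eval.add (h₁ : Eval d d') (h₂ : Eval e e') : Eval (d.add e) (d'.add e') :=
  ReflTransGen.trans
    (ReflTransGen.lift (p := Step) (Distr.add · e) (fun _ _ hs => hs.add_left e) _ _ h₁)
    (ReflTransGen.lift (p := Step) d'.add (fun _ _ hs => hs.add_right d') _ _ h₂)

theorem Eval.smul (h : Eval d d') (a : ℂ) : Eval (.smul a d) (.smul a d') :=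
  ReflTransGen.lift (p := Step) (Distr.smul a) (fun _ _ hs => hs.smul a) _ _ h

end TransGenStep

namespace CongLinear

variable {F G : Distr → Distr}

theorem transGen_of_step (hF : CongLinear F)
    (h_atom : ∀ u u', Atom u u' → TransGen Step (F (.single u)) (F u')) {d d' : Distr}
    (h : Step d d') : TransGen Step (F d) (F d') := by
  obtain ⟨α, u, u', r, hd, hd', hu⟩ := h
  have h_split : ∀ e, Cong (F ((Distr.smul α e).add r)) ((Distr.smul α (F e)).add (F r)) :=
    fun e => (hF.map_add _ _).trans ((hF.map_smul _ _).addCongr (.refl _))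
  exact transGen_step_congr ((hF.congr hd).trans (h_split _))
    (transGen_step_add_left (transGen_step_smul (h_atom u u' hu) α) _)
    ((hF.congr hd').trans (h_split _)).symm

theorem eval_of_eval (hF : CongLinear F)
    (h_atom : ∀ u u', Atom u u' → TransGen Step (F (.single u)) (F u')) {d d' : Distr}
    (h : Eval d d') : Eval (F d) (F d') :=
  ReflTransGen.lift' F (fun _ _ hs => (hF.transGen_of_step h_atom hs).to_reflTransGen) _ _ h

theorem transGen_of_leaves (hF : CongLinear F) (hG : CongLinear G) (P : Term → Prop)
    (h_leaf : ∀ u, P u → TransGen Step (F (.single u)) (G (.single u))) :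
    ∀ d, (∀ u ∈ domD d, P u) → (domD d).Nonempty → TransGen Step (F d) (G d)
  | .zero, _, hne => by simp [domD] at hne
  | .single u, hP, _ => h_leaf u (hP u (Finset.mem_singleton_self u))
  | .add d₁ d₂, hP, hne => by
    have hP₁ : ∀ u ∈ domD d₁, P u := fun u hu => hP u (Finset.mem_union_left _ hu)
    have hP₂ : ∀ u ∈ domD d₂, P u := fun u hu => hP u (Finset.mem_union_right _ hu)
    have h_empty : ∀ d, domD d = ∅ → Cong (F d) (G d) := fun d hd =>
      (hF.map_cong_zero_of_domD_eq_empty d hd).trans (hG.map_cong_zero_of_domD_eq_empty d hd).symm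
    refine transGen_step_congr (hF.map_add _ _) ?_ (hG.map_add _ _).symm
    rcases (domD d₁).eq_empty_or_nonempty with h₁ | h₁ <;>
      rcases (domD d₂).eq_empty_or_nonempty with h₂ | h₂
    · simp [domD, h₁, h₂] at hne
    · exact transGen_step_congr (.refl _)
        (transGen_step_add_right (transGen_of_leaves hF hG P h_leaf d₂ hP₂ h₂) _)
        ((h_empty d₁ h₁).addCongr (.refl _))
    · exact transGen_step_congr (.refl _)
        (transGen_step_add_left (transGen_of_leaves hF hG P h_leaf d₁ hP₁ h₁) _)
        ((Cong.refl _).addCongr (h_empty d₂ h₂))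
    · exact (transGen_step_add_left (transGen_of_leaves hF hG P h_leaf d₁ hP₁ h₁) _).trans
        (transGen_step_add_right (transGen_of_leaves hF hG P h_leaf d₂ hP₂ h₂) _)
  | .smul a d, hP, hne =>
    transGen_step_congr (hF.map_smul _ _)
      (transGen_step_smul (transGen_of_leaves hF hG P h_leaf d hP hne) a) (hG.map_smul _ _).symm

end CongLinear

theorem IsValD.exists_val_of_mem : ∀ {d : Distr}, IsValD d → ∀ u ∈ domD d, ∃ w, u = .val w
  | .zero, _, u, hu => by simp [domD] at hu
  | .single (.val w), _, u, hu => ⟨w, Finset.mem_singleton.mp hu⟩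
  | .single (.app _ _), hd, _, _
  | .single (.seq _ _), hd, _, _
  | .single (.letp _ _ _ _), hd, _, _
  | .single (.matc _ _ _ _ _), hd, _, _ => hd.elim
  | .add d₁ d₂, hd, u, hu =>
    (Finset.mem_union.mp hu).elim (exists_val_of_mem (d := d₁) hd.1 u)
      (exists_val_of_mem (d := d₂) hd.2 u)
  | .smul _ d, hd, u, hu => exists_val_of_mem (d := d) hd u hu

theorem domD_nonempty_of_normD_eq_one {d : Distr} (h : normD d = 1) : (domD d).Nonempty := by
  rw [Finset.nonempty_iff_ne_empty]
  intro hd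
  simp [normD, innerD, hd] at h

theorem appD_single_val (w : Val) : ∀ f, appD f (.single (.val w)) = appDV f w
  | .zero => rfl
  | .single _ => rfl
  | .add f₁ f₂ => by rw [appD, appDV, appD_single_val w f₁, appD_single_val w f₂]
  | .smul a f => by rw [appD, appDV, appD_single_val w f]

theorem congLinear_appTD (p : Term) : CongLinear (appTD p) :=
  .of_eq rfl (fun _ _ => rfl) (fun _ _ => rfl)

theorem congLinear_appD : ∀ f, CongLinear (appD f)
  | .zero => ⟨.refl _, fun _ _ => (Cong.addZero _).symm, fun a _ => (cong_smul_zero a).symm⟩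
  | .single t => congLinear_appTD t
  | .add f₁ f₂ => (congLinear_appD f₁).add (congLinear_appD f₂)
  | .smul a f => (congLinear_appD f).smul a

theorem eval_appD_right {t t' : Distr} (h : Eval t t') : ∀ s, Eval (appD s t) (appD s t')
  | .zero => .refl
  | .single p => (congLinear_appTD p).eval_of_eval (fun _ _ hu => .single (.of_atom (.appR p hu))) h
  | .add s₁ s₂ => (eval_appD_right h s₁).add (eval_appD_right h s₂)
  | .smul a s => (eval_appD_right h s).smul a

theorem transGen_appTD_of_atom {u : Term} {u' v : Distr} (hu : Atom u u') (hv : IsValD v)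
    (hv_ne : (domD v).Nonempty) : TransGen Step (appTD u v) (appD u' v) :=
  (congLinear_appTD u).transGen_of_leaves (congLinear_appD u') _
    (by rintro _ ⟨w, rfl⟩; rw [appD_single_val]; exact .single (.of_atom (.appL w hu)))
    v hv.exists_val_of_mem hv_ne

theorem eval_appD_left {v : Distr} (hv : IsValD v) (hv_ne : (domD v).Nonempty) {s f : Distr}
    (h : Eval s f) : Eval (appD s v) (appD f v) :=
  (CongLinear.of_eq (F := (appD · v)) rfl (fun _ _ => rfl) (fun _ _ => rfl)).eval_of_eval
    (fun _ _ hu => transGen_appTD_of_atom hu hv hv_ne) h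

theorem transGen_appDV_beta {x : ℕ} {f : Distr} (hf : ∀ u ∈ domD f, ∃ b, u = .val (.lam x b))
    (hf_ne : (domD f).Nonempty) (w : Val) :
    TransGen Step (appDV f w) (substD x w (stripLam x f)) :=
  (CongLinear.of_eq (F := (appDV · w)) rfl (fun _ _ => rfl) (fun _ _ => rfl)).transGen_of_leaves
    (CongLinear.of_eq (F := fun f => substD x w (stripLam x f)) rfl (fun _ _ => rfl)
      (fun _ _ => rfl)) _
    (by
      rintro _ ⟨b, rfl⟩
      simpa [appDV, stripLam] using TransGen.single (Step.of_atom (Atom.beta x b w)))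
    f hf hf_ne

theorem transGen_appD_bsubst {x : ℕ} {f v : Distr} (hf : ∀ u ∈ domD f, ∃ b, u = .val (.lam x b))
    (hf_ne : (domD f).Nonempty) (hv : IsValD v) (hv_ne : (domD v).Nonempty) :
    TransGen Step (appD f v) (bsubst x (stripLam x f) v) :=
  (congLinear_appD f).transGen_of_leaves
    (CongLinear.of_eq (F := bsubst x (stripLam x f)) rfl (fun _ _ => rfl) (fun _ _ => rfl)) _
    (by rintro _ ⟨w, rfl⟩; rw [appD_single_val]; exact transGen_appDV_beta hf hf_ne w)
    v hv.exists_val_of_mem hv_ne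

/-- Application of realizers: if s⃗ ⊩ A⇒B and t⃗ ⊩ A then s⃗ t⃗ ⊩ B. -/
theorem application_of_realizers (A B : Set Distr)
    (hA : A ⊆ Sphere) (hB : B ⊆ Sphere)
    (s t : Distr) (hs : fvD s = ∅) (ht : fvD t = ∅)
    (hsr : Realizes (uarrowT A B) s) (htr : Realizes A t) :
    Realizes B (appD s t) := by
  obtain ⟨f, ⟨⟨-, hf_norm⟩, x, hf_lam, hf_app⟩, hsf⟩ := hsr
  obtain ⟨v, hvA, htv⟩ := htr
  obtain ⟨⟨hv_val, -⟩, hv_norm⟩ := hA hvA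
  have hv_ne := domD_nonempty_of_normD_eq_one hv_norm
  obtain ⟨w, hwB, hw⟩ := hf_app v hvA
  have h_beta := transGen_appD_bsubst hf_lam (domD_nonempty_of_normD_eq_one hf_norm) hv_val hv_ne
  exact ⟨w, hwB, (eval_appD_right htv s).trans <| (eval_appD_left hv_val hv_ne hsf).trans <|
    h_beta.to_reflTransGen.trans hw⟩

end LinAlg
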